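/- arXiv:2005.06666 — 7 statements merged into one kernel-verified Lean document; each statement's English description precedes it below -/
import Mathlib

section
/- Let M be a positive integer, ρ > 0, let p_1,...,p_M be a probability vector, and let c_1,...,c_M be positive reals with cumulative sums S_i = c_1 + ... + c_i. Then ∑_{i=1}^M S_i^ρ p_i ≥ (∑_{i=1}^M 1/S_i)^{−ρ} · (∑_{i=1}^M p_i^{1/(1+ρ)})^{1+ρ}. -/
/-!
Write `pᵢ^{1/(1+ρ)} = Sᵢ⁻¹ · (Sᵢ pᵢ^{1/ρ})` and apply Hölder's inequality with exponents
`1` and `ρ` (so that `1/1 + 1/ρ = (1+ρ)/ρ`): this gives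
`(∑ pᵢ^{1/(1+ρ)})^{1+ρ} ≤ (∑ 1/Sᵢ)^ρ · ∑ Sᵢ^ρ pᵢ`, and dividing by `(∑ 1/Sᵢ)^ρ` gives the bound.
-/

open Finset Real

theorem rpow_sum_rpow_one_div_one_add_le {ι : Type*} (s : Finset ι) {ρ : ℝ} (hρ : 0 < ρ)
    {w p : ι → ℝ} (hw : ∀ i ∈ s, 0 < w i) (hp : ∀ i ∈ s, 0 ≤ p i) :
    (∑ i ∈ s, p i ^ (1 / (1 + ρ))) ^ (1 + ρ) ≤
      (∑ i ∈ s, 1 / w i) ^ ρ * ∑ i ∈ s, w i ^ ρ * p i := by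
  have hρ₁ : 0 < 1 + ρ := by linarith
  have htriple : HolderTriple 1 ρ (ρ / (1 + ρ)) := ⟨by field_simp; ring, one_pos, hρ⟩
  have holder := Lr_rpow_le_Lp_mul_Lq_of_nonneg s htriple
    (f := fun i ↦ (w i)⁻¹) (g := fun i ↦ w i * p i ^ ρ⁻¹)
    (fun i hi ↦ (inv_pos.2 (hw i hi)).le)
    (fun i hi ↦ mul_nonneg (hw i hi).le (rpow_nonneg (hp i hi) _))
  have hlhs : ∀ i ∈ s,
      ((w i)⁻¹ * (w i * p i ^ ρ⁻¹)) ^ (ρ / (1 + ρ)) = p i ^ (1 / (1 + ρ)) := by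
    intro i hi
    rw [inv_mul_cancel_left₀ (hw i hi).ne', ← rpow_mul (hp i hi)]
    congr 1
    field_simp
  have hrhs : ∀ i ∈ s, (w i * p i ^ ρ⁻¹) ^ ρ = w i ^ ρ * p i := by
    intro i hi
    rw [mul_rpow (hw i hi).le (rpow_nonneg (hp i hi) _), rpow_inv_rpow (hp i hi) hρ.ne']
  rw [sum_congr rfl hlhs, sum_congr rfl hrhs] at holder
  simp only [rpow_one, div_one, ← one_div] at holder
  have hA : 0 ≤ ∑ i ∈ s, 1 / w i := sum_nonneg fun i hi ↦ (one_div_pos.2 (hw i hi)).le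
  have hC : 0 ≤ ∑ i ∈ s, w i ^ ρ * p i :=
    sum_nonneg fun i hi ↦ mul_nonneg (rpow_nonneg (hw i hi).le _) (hp i hi)
  calc (∑ i ∈ s, p i ^ (1 / (1 + ρ))) ^ (1 + ρ)
      ≤ ((∑ i ∈ s, 1 / w i) ^ (ρ / (1 + ρ)) *
          (∑ i ∈ s, w i ^ ρ * p i) ^ (ρ / (1 + ρ) / ρ)) ^ (1 + ρ) :=
        rpow_le_rpow (sum_nonneg fun i hi ↦ rpow_nonneg (hp i hi) _) holder hρ₁.le
    _ = (∑ i ∈ s, 1 / w i) ^ ρ * ∑ i ∈ s, w i ^ ρ * p i := by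
        rw [mul_rpow (rpow_nonneg hA _) (rpow_nonneg hC _), ← rpow_mul hA, ← rpow_mul hC]
        field_simp
        rw [rpow_one]

/-- At `a = 0` this rests on the convention `0 ^ (-ρ) = 0`. -/
theorem rpow_neg_mul_le_of_le_rpow_mul {a b c ρ : ℝ} (ha : 0 ≤ a) (hc : 0 ≤ c) (hρ : ρ ≠ 0)
    (h : b ≤ a ^ ρ * c) : a ^ (-ρ) * b ≤ c := by
  obtain rfl | ha := ha.eq_or_lt
  · simpa [zero_rpow (neg_ne_zero.2 hρ)] using hc
  calc a ^ (-ρ) * b ≤ a ^ (-ρ) * (a ^ ρ * c) := by gcongr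
    _ = c := by rw [← mul_assoc, ← rpow_add ha, neg_add_cancel, rpow_zero, one_mul]

theorem guessing_cost_holder_lower_bound_general
    (M : ℕ) (ρ : ℝ) (hρ : 0 < ρ)
    (p c : ℕ → ℝ)
    (hp : ∀ k, 1 ≤ k → k ≤ M → 0 ≤ p k)
    (hc : ∀ k, 1 ≤ k → k ≤ M → 0 < c k)
    (S : ℕ → ℝ) (hS : ∀ k, S k = ∑ l ∈ Finset.Icc 1 k, c l) :
    (∑ i ∈ Finset.Icc 1 M, 1 / S i) ^ (-ρ) *
        (∑ i ∈ Finset.Icc 1 M, p i ^ (1 / (1 + ρ))) ^ (1 + ρ) ≤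
      ∑ i ∈ Finset.Icc 1 M, S i ^ ρ * p i := by
  have hS_pos : ∀ i ∈ Icc 1 M, 0 < S i := fun i hi ↦ by
    rw [mem_Icc] at hi
    rw [hS]
    exact sum_pos (fun l hl ↦ hc l (mem_Icc.1 hl).1 ((mem_Icc.1 hl).2.trans hi.2))
      (nonempty_Icc.2 hi.1)
  have hp' : ∀ i ∈ Icc 1 M, 0 ≤ p i := fun i hi ↦ hp i (mem_Icc.1 hi).1 (mem_Icc.1 hi).2
  refine rpow_neg_mul_le_of_le_rpow_mul ?_ ?_ hρ.ne'
    (rpow_sum_rpow_one_div_one_add_le _ hρ hS_pos hp')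
  · exact sum_nonneg fun i hi ↦ (one_div_pos.2 (hS_pos i hi)).le
  · exact sum_nonneg fun i hi ↦ mul_nonneg (rpow_nonneg (hS_pos i hi).le _) (hp' i hi)

/-- Hölder-based lower bound on the ρ-th moment of guessing cost. -/
theorem guessing_cost_holder_lower_bound
    (M : ℕ) (hM : 0 < M) (ρ : ℝ) (hρ : 0 < ρ)
    (p c : ℕ → ℝ)
    (hp : ∀ k, 1 ≤ k → k ≤ M → 0 ≤ p k)
    (hpsum : ∑ k ∈ Finset.Icc 1 M, p k = 1)
    (hc : ∀ k, 1 ≤ k → k ≤ M → 0 < c k)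
    (S : ℕ → ℝ) (hS : ∀ k, S k = ∑ l ∈ Finset.Icc 1 k, c l) :
    (∑ i ∈ Finset.Icc 1 M, 1 / S i) ^ (-ρ) *
        (∑ i ∈ Finset.Icc 1 M, p i ^ (1 / (1 + ρ))) ^ (1 + ρ) ≤
      ∑ i ∈ Finset.Icc 1 M, S i ^ ρ * p i :=
  guessing_cost_holder_lower_bound_general M ρ hρ p c hp hc S hS
end

section
/- Let X be a random variable on a finite set {x_1,...,x_M} with probabilities P(x) and positive costs c_x satisfying, for the optimal mean-cost order, c_{x'} P(x) ≤ c_x P(x') whenever x' is guessed no later than x. Then for any ρ ≥ 0, the ρ-th moment of the guessing cost under this order satisfies ∑_x P(x) C(x)^ρ ≤ (∑_x c_x^{ρ/(1+ρ)} P(x)^{1/(1+ρ)})^{1+ρ}, where C(x) = ∑_{x': guessed no later than x} c_{x'}. -/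
/-!
Splitting `c x' = c x' ^ (ρ/(1+ρ)) * c x' ^ (1/(1+ρ))` and bounding the second factor through the
optimality condition `c x' ≤ (c x / P x) * P x'` for every `x'` guessed no later than `x` gives
`C x ≤ (c x / P x) ^ (1/(1+ρ)) * S` with `S = ∑ c ^ (ρ/(1+ρ)) * P ^ (1/(1+ρ))`. Raising this to the
power `ρ` and multiplying by `P x` gives `P x * C x ^ ρ ≤ c x ^ (ρ/(1+ρ)) * P x ^ (1/(1+ρ)) * S ^ ρ`,
and summing over `x` gives `S ^ (1 + ρ)`.
-/

open Finset Real

namespace GuessingCost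

lemma le_rpow_mul_rpow_mul_rpow {a b c r p : ℝ} (hc : 0 ≤ c) (hr : 0 ≤ r) (hp : 0 ≤ p)
    (hb : 0 ≤ b) (hab : a + b = 1) (h : c ≤ r * p) :
    c ≤ r ^ b * (c ^ a * p ^ b) :=
  calc c = c ^ a * c ^ b := by rw [← rpow_add' hc (by rw [hab]; exact one_ne_zero), hab, rpow_one]
    _ ≤ c ^ a * (r * p) ^ b := by gcongr
    _ = r ^ b * (c ^ a * p ^ b) := by rw [mul_rpow hr hp]; ring

lemma sum_le_div_rpow_mul_sum {ι : Type*} [Fintype ι] {s : Finset ι} {c P : ι → ℝ} {x : ι}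
    {a b : ℝ} (hc : ∀ i, 0 ≤ c i) (hP : ∀ i, 0 ≤ P i) (hPx : 0 < P x) (hb : 0 ≤ b)
    (hab : a + b = 1) (hopt : ∀ i ∈ s, c i * P x ≤ c x * P i) :
    ∑ i ∈ s, c i ≤ (c x / P x) ^ b * ∑ i, c i ^ a * P i ^ b := by
  have hr : 0 ≤ c x / P x := div_nonneg (hc x) hPx.le
  calc ∑ i ∈ s, c i ≤ ∑ i ∈ s, (c x / P x) ^ b * (c i ^ a * P i ^ b) := by
        refine sum_le_sum fun i hi => le_rpow_mul_rpow_mul_rpow (hc i) hr (hP i) hb hab ?_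
        rw [div_mul_eq_mul_div, le_div_iff₀ hPx]
        exact hopt i hi
    _ = (c x / P x) ^ b * ∑ i ∈ s, c i ^ a * P i ^ b := (mul_sum _ _ _).symm
    _ ≤ (c x / P x) ^ b * ∑ i, c i ^ a * P i ^ b := by
        gcongr
        · intro i _ _
          have := hc i; have := hP i; positivity
        · exact subset_univ s

lemma mul_rpow_le_of_le_div_rpow_mul {ρ c p C S : ℝ} (hρ : 0 ≤ ρ) (hc : 0 ≤ c) (hp : 0 < p)
    (hC : 0 ≤ C) (hS : 0 ≤ S) (h : C ≤ (c / p) ^ (1 / (1 + ρ)) * S) :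
    p * C ^ ρ ≤ c ^ (ρ / (1 + ρ)) * p ^ (1 / (1 + ρ)) * S ^ ρ := by
  have hcp : 0 ≤ c / p := div_nonneg hc hp.le
  calc p * C ^ ρ ≤ p * ((c / p) ^ (1 / (1 + ρ)) * S) ^ ρ := by gcongr
    _ = p * (c / p) ^ (ρ / (1 + ρ)) * S ^ ρ := by
        rw [mul_rpow (rpow_nonneg hcp _) hS, ← rpow_mul hcp, one_div_mul_eq_div, mul_assoc]
    _ = c ^ (ρ / (1 + ρ)) * p ^ (1 / (1 + ρ)) * S ^ ρ := by
        have hexp : 1 / (1 + ρ) = 1 - ρ / (1 + ρ) := by field_simp; ring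
        rw [div_rpow hc hp.le, hexp, rpow_sub hp, rpow_one]
        ring

end GuessingCost

open GuessingCost in
theorem guessing_cost_moment_upper_bound_general
    (M : ℕ) (ρ : ℝ) (hρ : 0 ≤ ρ)
    (P c : Fin M → ℝ)
    (hP : ∀ x, 0 ≤ P x)
    (hc : ∀ x, 0 < c x)
    (hopt : ∀ x' x : Fin M, x' ≤ x → c x' * P x ≤ c x * P x')
    (C : Fin M → ℝ) (hC : ∀ x, C x = ∑ x' ∈ Finset.Iic x, c x') :
    ∑ x, P x * C x ^ ρ ≤
      (∑ x, c x ^ (ρ / (1 + ρ)) * P x ^ (1 / (1 + ρ))) ^ (1 + ρ) := by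
  have hc' : ∀ x, 0 ≤ c x := fun x => (hc x).le
  have hab : ρ / (1 + ρ) + 1 / (1 + ρ) = 1 := by field_simp; ring
  set S := ∑ x, c x ^ (ρ / (1 + ρ)) * P x ^ (1 / (1 + ρ))
  have hS : 0 ≤ S := sum_nonneg fun x _ => by have := hc' x; have := hP x; positivity
  have hterm : ∀ x, P x * C x ^ ρ ≤ c x ^ (ρ / (1 + ρ)) * P x ^ (1 / (1 + ρ)) * S ^ ρ := by
    intro x
    rcases (hP x).eq_or_lt with hPx | hPx
    · rw [← hPx, zero_mul]
      have := hc' x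
      positivity
    have hCx : C x ≤ (c x / P x) ^ (1 / (1 + ρ)) * S := hC x ▸
      sum_le_div_rpow_mul_sum hc' hP hPx (by positivity) hab fun x' hx' =>
        hopt x' x (mem_Iic.mp hx')
    exact mul_rpow_le_of_le_div_rpow_mul hρ (hc' x) hPx
      (hC x ▸ sum_nonneg fun x' _ => hc' x') hS hCx
  calc ∑ x, P x * C x ^ ρ ≤ ∑ x, c x ^ (ρ / (1 + ρ)) * P x ^ (1 / (1 + ρ)) * S ^ ρ :=
        sum_le_sum fun x _ => hterm x
    _ = S ^ (1 + ρ) := by rw [← sum_mul, rpow_add' hS (by positivity), rpow_one]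

/-- Single-letter upper bound on moments of guessing cost under the optimal
mean-cost order (analogue of Arikan's bound with costs, Theorem 3.2). -/
theorem guessing_cost_moment_upper_bound
    (M : ℕ) (hM : 0 < M) (ρ : ℝ) (hρ : 0 ≤ ρ)
    (P c : Fin M → ℝ)
    (hP : ∀ x, 0 ≤ P x) (hPsum : ∑ x, P x = 1)
    (hc : ∀ x, 0 < c x)
    (hopt : ∀ x' x : Fin M, x' ≤ x → c x' * P x ≤ c x * P x')
    (C : Fin M → ℝ) (hC : ∀ x, C x = ∑ x' ∈ Finset.Iic x, c x') :
    ∑ x, P x * C x ^ ρ ≤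
      (∑ x, c x ^ (ρ / (1 + ρ)) * P x ^ (1 / (1 + ρ))) ^ (1 + ρ) :=
  guessing_cost_moment_upper_bound_general M ρ hρ P c hP hc hopt C hC
end

section
/- Let M' be a positive integer and q_1,...,q_{M'} nonnegative reals satisfying q_{k+1}^{1/ρ} ≤ (q_1^{1/ρ} + ... + q_k^{1/ρ})/k for k = 1,...,M'−1, where ρ ≥ 1. Then ∑_{k=1}^{M'} (k^ρ − (k−1)^ρ) q_k ≤ (∑_{k=1}^{M'} q_k^{1/ρ})^ρ. -/
/-!
Write `x_k = q_k^{1/ρ}` and `S_n = x_1 + ⋯ + x_n`; we show the inequality for every prefix by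
induction on `n`. The hypothesis says `n x_{n+1} ≤ S_n`, and since `t ↦ (t + x)^ρ - t^ρ` is
nondecreasing for the convex function `t ↦ t^ρ`, the new term satisfies
`((n+1)^ρ - n^ρ) x_{n+1}^ρ = (n x_{n+1} + x_{n+1})^ρ - (n x_{n+1})^ρ ≤ (S_n + x_{n+1})^ρ - S_n^ρ`,
which is exactly the increase of the right-hand side.
-/

open Finset

theorem ConvexOn.map_add_sub_map_le_of_le {𝕜 : Type*} [Field 𝕜] [LinearOrder 𝕜]
    [IsStrictOrderedRing 𝕜] {s : Set 𝕜} {f : 𝕜 → 𝕜} (hf : ConvexOn 𝕜 s f) {a b x : 𝕜}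
    (ha : a ∈ s) (hbx : b + x ∈ s) (hab : a ≤ b) (hx : 0 ≤ x) :
    f (a + x) - f a ≤ f (b + x) - f b := by
  rcases hx.eq_or_lt with rfl | hx
  · simp
  have hax : a + x ∈ s := hf.1.ordConnected.out ha hbx ⟨by linarith, by linarith⟩
  have hb : b ∈ s := hf.1.ordConnected.out ha hbx ⟨hab, by linarith⟩
  -- compare both increments with the secant over `[a, b + x]`
  have h₁ := hf.secant_mono ha hax hbx (by linarith) (by linarith) (by linarith)
  have h₂ := hf.secant_mono hbx ha hb (by linarith) (by linarith) hab
  rw [add_sub_cancel_left] at h₁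
  rw [show b - (b + x) = -x by ring, div_neg, ← neg_div, neg_sub, ← neg_div_neg_eq, neg_sub,
    neg_sub] at h₂
  exact (div_le_div_iff_of_pos_right hx).mp (h₁.trans h₂)

theorem rpow_add_one_sub_rpow_mul_le {ρ n x S : ℝ} (hρ : 1 ≤ ρ) (hn : 0 ≤ n) (hx : 0 ≤ x)
    (hnS : n * x ≤ S) :
    ((n + 1) ^ ρ - n ^ ρ) * x ^ ρ ≤ (S + x) ^ ρ - S ^ ρ := by
  have hnx : 0 ≤ n * x := mul_nonneg hn hx
  calc ((n + 1) ^ ρ - n ^ ρ) * x ^ ρ = (n * x + x) ^ ρ - (n * x) ^ ρ := by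
        rw [sub_mul, ← Real.mul_rpow (by positivity) hx, ← Real.mul_rpow hn hx, add_one_mul]
    _ ≤ (S + x) ^ ρ - S ^ ρ :=
        (convexOn_rpow hρ).map_add_sub_map_le_of_le hnx (Set.mem_Ici.mpr (by linarith)) hnS hx

theorem boztas_weighted_lemma_general
    (M' : ℕ) (ρ : ℝ) (hρ : 1 ≤ ρ)
    (q : ℕ → ℝ) (hq : ∀ k, 1 ≤ k → k ≤ M' → 0 ≤ q k)
    (hcond : ∀ k, 1 ≤ k → k ≤ M' - 1 →
      q (k + 1) ^ (1 / ρ) ≤ (∑ l ∈ Finset.Icc 1 k, q l ^ (1 / ρ)) / (k : ℝ)) :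
    ∑ k ∈ Finset.Icc 1 M', ((k : ℝ) ^ ρ - ((k : ℝ) - 1) ^ ρ) * q k ≤
      (∑ k ∈ Finset.Icc 1 M', q k ^ (1 / ρ)) ^ ρ := by
  have hρ0 : ρ ≠ 0 := by positivity
  suffices ∀ n ≤ M', ∑ k ∈ Icc 1 n, ((k : ℝ) ^ ρ - ((k : ℝ) - 1) ^ ρ) * q k ≤
      (∑ k ∈ Icc 1 n, q k ^ (1 / ρ)) ^ ρ from this M' le_rfl
  intro n
  induction n with
  | zero => simp [Real.zero_rpow hρ0]
  | succ n ih =>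
    intro hn
    set S := ∑ k ∈ Icc 1 n, q k ^ (1 / ρ)
    set x := q (n + 1) ^ (1 / ρ)
    have hqn : 0 ≤ q (n + 1) := hq (n + 1) (by omega) hn
    have hx : 0 ≤ x := by positivity
    have hnx : (n : ℝ) * x ≤ S := by
      rcases Nat.eq_zero_or_pos n with rfl | hn0
      · simp [S]
      · exact (le_div_iff₀' (by positivity)).mp (hcond n hn0 (by omega))
    have hqx : q (n + 1) = x ^ ρ := by simp only [x, one_div, Real.rpow_inv_rpow hqn hρ0]
    have step := rpow_add_one_sub_rpow_mul_le hρ n.cast_nonneg hx hnx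
    rw [← hqx] at step
    rw [sum_Icc_succ_top (by omega), sum_Icc_succ_top (by omega)]
    push_cast
    rw [add_sub_cancel_right]
    linarith [ih (by omega)]

/-- Boztas' weighted lemma in the guessing-cost setting. -/
theorem boztas_weighted_lemma
    (M' : ℕ) (hM' : 0 < M') (ρ : ℝ) (hρ : 1 ≤ ρ)
    (q : ℕ → ℝ) (hq : ∀ k, 1 ≤ k → k ≤ M' → 0 ≤ q k)
    (hcond : ∀ k, 1 ≤ k → k ≤ M' - 1 →
      q (k + 1) ^ (1 / ρ) ≤ (∑ l ∈ Finset.Icc 1 k, q l ^ (1 / ρ)) / (k : ℝ)) :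
    ∑ k ∈ Finset.Icc 1 M', ((k : ℝ) ^ ρ - ((k : ℝ) - 1) ^ ρ) * q k ≤
      (∑ k ∈ Finset.Icc 1 M', q k ^ (1 / ρ)) ^ ρ :=
  boztas_weighted_lemma_general M' ρ hρ q hq hcond
end

section
/- Let c ≥ 1 be real and ρ ≥ 1. Define r(u) = (u^{1+ρ} − (u−c)^{1+ρ} − c^{1+ρ})/(c(1+ρ)) − (u−c)^ρ for u ≥ c. Then r(u) ≥ 0 for all u ≥ c. -/
/-!
Since `r c = 0`, it suffices that `r` is monotone on `[c, ∞)`. Its derivative is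
`(u ^ ρ - (u - c) ^ ρ) / c - ρ * (u - c) ^ (ρ - 1)`, the secant slope of `t ↦ t ^ ρ` over
`[u - c, u]` minus its derivative at the left endpoint, which is nonnegative because
`t ↦ t ^ ρ` is convex for `ρ ≥ 1`.
-/

open Set

theorem mul_rpow_sub_one_le_slope {p x y : ℝ} (hp : 1 ≤ p) (hx : 0 ≤ x) (hxy : x < y) :
    p * x ^ (p - 1) ≤ (y ^ p - x ^ p) / (y - x) := by
  rw [← slope_def_field (fun t : ℝ ↦ t ^ p)]
  exact (convexOn_rpow hp).le_slope_of_hasDerivAt hx (hx.trans hxy.le) hxy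
    (Real.hasDerivAt_rpow_const (.inr hp))

noncomputable def parametricR (c ρ u : ℝ) : ℝ :=
  (u ^ (1 + ρ) - (u - c) ^ (1 + ρ) - c ^ (1 + ρ)) / (c * (1 + ρ)) - (u - c) ^ ρ

theorem parametricR_self (c : ℝ) {ρ : ℝ} (hρ : 0 < ρ) : parametricR c ρ c = 0 := by
  simp [parametricR, Real.zero_rpow hρ.ne', Real.zero_rpow (by linarith : 1 + ρ ≠ 0)]

theorem continuous_parametricR (c : ℝ) {ρ : ℝ} (hρ : 0 ≤ ρ) : Continuous (parametricR c ρ) := by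
  have h1 := Real.continuous_rpow_const (by linarith : (0 : ℝ) ≤ 1 + ρ)
  have h2 := Real.continuous_rpow_const hρ
  unfold parametricR
  fun_prop

theorem hasDerivAt_parametricR {c ρ v : ℝ} (hc : 0 < c) (hcv : c < v) (hρ : 1 + ρ ≠ 0) :
    HasDerivAt (parametricR c ρ) ((v ^ ρ - (v - c) ^ ρ) / c - ρ * (v - c) ^ (ρ - 1)) v := by
  have hv : v ≠ 0 := by linarith
  have hvc : v - c ≠ 0 := by linarith
  have hshift : HasDerivAt (fun w ↦ w - c) 1 v := (hasDerivAt_id' v).sub_const c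
  have h : HasDerivAt (parametricR c ρ) _ v :=
    ((((Real.hasDerivAt_rpow_const (p := 1 + ρ) (.inl hv)).sub
      (hshift.rpow_const (p := 1 + ρ) (.inl hvc))).sub_const (c ^ (1 + ρ))).div_const
      (c * (1 + ρ))).sub (hshift.rpow_const (p := ρ) (.inl hvc))
  refine h.congr_deriv ?_
  rw [add_sub_cancel_left]
  field_simp

theorem monotoneOn_parametricR {c ρ : ℝ} (hc : 0 < c) (hρ : 1 ≤ ρ) :
    MonotoneOn (parametricR c ρ) (Ici c) := by
  refine monotoneOn_of_hasDerivWithinAt_nonneg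
    (f' := fun v ↦ (v ^ ρ - (v - c) ^ ρ) / c - ρ * (v - c) ^ (ρ - 1)) (convex_Ici c)
    (continuous_parametricR c (by linarith)).continuousOn (fun v hv ↦ ?_) (fun v hv ↦ ?_)
  · rw [interior_Ici] at hv
    exact (hasDerivAt_parametricR hc hv (by linarith)).hasDerivWithinAt
  · rw [interior_Ici] at hv
    have hslope := mul_rpow_sub_one_le_slope hρ (sub_nonneg.2 (le_of_lt hv)) (sub_lt_self v hc)
    rw [sub_sub_cancel] at hslope
    exact sub_nonneg.2 hslope

/-- Nonnegativity of the parametric function r(u) for ρ ≥ 1 (Appendix E). -/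
theorem parametric_nonneg_rho_ge_one (c ρ : ℝ) (hc : 1 ≤ c) (hρ : 1 ≤ ρ) :
    ∀ u : ℝ, c ≤ u →
      0 ≤ (u ^ (1 + ρ) - (u - c) ^ (1 + ρ) - c ^ (1 + ρ)) / (c * (1 + ρ)) -
          (u - c) ^ ρ := by
  intro u hu
  have hmono := monotoneOn_parametricR (by linarith) hρ self_mem_Ici hu hu
  rwa [parametricR_self c (by linarith)] at hmono
end

section
/- Let ρ ∈ [1,2] and c ≥ 1 be real. Then for all u ≥ c, u^ρ ≤ (u^{1+ρ} − (u−c)^{1+ρ})/(1+ρ) + (u^ρ − (u−c)^ρ)/ρ + c^ρ(ρ^2 − cρ − 1)/(ρ(1+ρ)). -/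
/-!
Write `v = u - c` and let `r(u)` be the right-hand side minus the left-hand side. Since
`r(c) = 0`, it suffices that `r` is monotone on `[c, ∞)`. Its derivative is
`(u + 1 - ρ) u^(ρ-1) - (v + 1) v^(ρ-1)`, and this is nonnegative: weighted AM-GM gives
`v^(ρ-1) u^(2-ρ) ≤ (ρ-1) v + (2-ρ) u`, after which the claim is the polynomial inequality
`(v + 1)((ρ-1) v + (2-ρ) u) ≤ (u + 1 - ρ) u`, whose slack is `(c - 1)(ρ v + c)`.
-/

open Real Set

noncomputable def pointwiseGap (ρ c u : ℝ) : ℝ :=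
  (u ^ (1 + ρ) - (u - c) ^ (1 + ρ)) / (1 + ρ) + (u ^ ρ - (u - c) ^ ρ) / ρ +
    c ^ ρ * (ρ ^ 2 - c * ρ - 1) / (ρ * (1 + ρ)) - u ^ ρ

theorem pointwiseGap_self {ρ c : ℝ} (hρ : 0 < ρ) (hc : 0 ≤ c) : pointwiseGap ρ c c = 0 := by
  have hρ1 : 1 + ρ ≠ 0 := by linarith
  rw [pointwiseGap, sub_self, zero_rpow hρ1, zero_rpow hρ.ne', add_comm 1 ρ,
    rpow_add' hc (by linarith), rpow_one]
  field_simp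
  ring

theorem continuous_pointwiseGap {ρ : ℝ} (hρ : 0 ≤ ρ) (c : ℝ) :
    Continuous (pointwiseGap ρ c) := by
  have h1 : Continuous fun x : ℝ => x ^ (1 + ρ) := continuous_rpow_const (by linarith)
  have h2 : Continuous fun x : ℝ => x ^ ρ := continuous_rpow_const hρ
  unfold pointwiseGap
  fun_prop

theorem hasDerivAt_pointwiseGap {ρ c u : ℝ} (hρ : 0 < ρ) (hu : u ≠ 0) (huc : u ≠ c) :
    HasDerivAt (pointwiseGap ρ c)
      ((u + 1 - ρ) * u ^ (ρ - 1) - (u - c + 1) * (u - c) ^ (ρ - 1)) u := by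
  have hv : u - c ≠ 0 := sub_ne_zero.mpr huc
  have hpow : ∀ p, HasDerivAt (fun x : ℝ => x ^ p) (p * u ^ (p - 1)) u :=
    fun p => hasDerivAt_rpow_const (Or.inl hu)
  have hpow_shift : ∀ p, HasDerivAt (fun x : ℝ => (x - c) ^ p) (1 * p * (u - c) ^ (p - 1)) u :=
    fun p => ((hasDerivAt_id u).sub_const c).rpow_const (Or.inl hv)
  have h := (((((hpow (1 + ρ)).sub (hpow_shift (1 + ρ))).div_const (1 + ρ)).add
    (((hpow ρ).sub (hpow_shift ρ)).div_const ρ)).add_const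
      (c ^ ρ * (ρ ^ 2 - c * ρ - 1) / (ρ * (1 + ρ)))).sub (hpow ρ)
  refine h.congr_deriv ?_
  rw [add_sub_cancel_left, rpow_sub_one hu, rpow_sub_one hv]
  field_simp
  ring

theorem sub_add_one_mul_rpow_sub_one_le {ρ c u : ℝ} (hρ1 : 1 ≤ ρ) (hρ2 : ρ ≤ 2) (hc : 1 ≤ c)
    (hcu : c ≤ u) : (u - c + 1) * (u - c) ^ (ρ - 1) ≤ (u + 1 - ρ) * u ^ (ρ - 1) := by
  have hu : 0 < u := by linarith
  have hv : 0 ≤ u - c := by linarith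
  have amgm : (u - c) ^ (ρ - 1) * u ^ (2 - ρ) ≤ (ρ - 1) * (u - c) + (2 - ρ) * u :=
    geom_mean_le_arith_mean2_weighted (by linarith) (by linarith) hv hu.le (by ring)
  have poly : (u - c + 1) * ((ρ - 1) * (u - c) + (2 - ρ) * u) ≤ (u + 1 - ρ) * u := by
    nlinarith [mul_nonneg (sub_nonneg.mpr hc)
      (add_nonneg (mul_nonneg (by linarith : 0 ≤ ρ) hv) (by linarith : 0 ≤ c))]
  have hsplit : u ^ (ρ - 1) * u ^ (2 - ρ) = u := by
    rw [← rpow_add hu]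
    norm_num
  rw [← mul_le_mul_iff_of_pos_right (rpow_pos_of_pos hu (2 - ρ))]
  calc (u - c + 1) * (u - c) ^ (ρ - 1) * u ^ (2 - ρ)
      = (u - c + 1) * ((u - c) ^ (ρ - 1) * u ^ (2 - ρ)) := by ring
    _ ≤ (u - c + 1) * ((ρ - 1) * (u - c) + (2 - ρ) * u) := by gcongr
    _ ≤ (u + 1 - ρ) * u := poly
    _ = (u + 1 - ρ) * u ^ (ρ - 1) * u ^ (2 - ρ) := by rw [mul_assoc, hsplit]

theorem monotoneOn_pointwiseGap {ρ c : ℝ} (hρ1 : 1 ≤ ρ) (hρ2 : ρ ≤ 2) (hc : 1 ≤ c) :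
    MonotoneOn (pointwiseGap ρ c) (Ici c) := by
  have hderiv : ∀ u ∈ interior (Ici c), HasDerivAt (pointwiseGap ρ c)
      ((u + 1 - ρ) * u ^ (ρ - 1) - (u - c + 1) * (u - c) ^ (ρ - 1)) u := by
    intro u hu
    rw [interior_Ici, mem_Ioi] at hu
    exact hasDerivAt_pointwiseGap (by linarith) (by linarith) hu.ne'
  refine monotoneOn_of_deriv_nonneg (convex_Ici c)
    (continuous_pointwiseGap (by linarith) c).continuousOn
    (fun u hu => (hderiv u hu).differentiableAt.differentiableWithinAt) fun u hu => ?_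
  rw [(hderiv u hu).deriv, sub_nonneg]
  rw [interior_Ici, mem_Ioi] at hu
  exact sub_add_one_mul_rpow_sub_one_le hρ1 hρ2 hc hu.le

/-- Pointwise inequality for the improved upper bound when ρ ∈ [1,2]
(Lemma in Appendix F). -/
theorem pointwise_bound_rho_one_two (ρ c : ℝ) (hρ1 : 1 ≤ ρ) (hρ2 : ρ ≤ 2)
    (hc : 1 ≤ c) :
    ∀ u : ℝ, c ≤ u →
      u ^ ρ ≤ (u ^ (1 + ρ) - (u - c) ^ (1 + ρ)) / (1 + ρ) +
          (u ^ ρ - (u - c) ^ ρ) / ρ +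
          c ^ ρ * (ρ ^ 2 - c * ρ - 1) / (ρ * (1 + ρ)) := by
  intro u hu
  have hmono := monotoneOn_pointwiseGap hρ1 hρ2 hc self_mem_Ici hu hu
  rw [pointwiseGap_self (by linarith) (by linarith), pointwiseGap] at hmono
  linarith
end

section
/- Let ρ ≥ 2 and c > 1 be real. Define r(u) = (u^{1+ρ} − (u−c)^{1+ρ})/(c(1+ρ)) − u^ρ + (ρ c u^{ρ−1})/2 − ρ(ρ−1)/(2(1+ρ)) for u ≥ c. Then r(u) ≥ 0 for all u ≥ c. -/
open Real Set

/-!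
Write `r` for the function of the statement. At `u = c` it equals
`ρ(ρ-1)(c^ρ-1)/(2(1+ρ)) ≥ 0`, and its derivative is
`((u^ρ - (u-c)^ρ) - ρ c u^(ρ-1) + ρ(ρ-1)/2 c² u^(ρ-2)) / c`. For `ρ ≥ 2` the third
derivative of `x ↦ x^ρ` is nonnegative, so its second-order Taylor polynomial at `u`
overestimates `(u-c)^ρ`; hence `r' ≥ 0` and `r` is nondecreasing on `[c, ∞)`. After scaling
by `u`, the Taylor bound is Bernoulli's inequality `(1-t)^(ρ-1) ≥ 1 - (ρ-1)t` integrated once.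
-/

lemma monotoneOn_of_hasDerivAt_nonneg {D : Set ℝ} (hD : Convex ℝ D) {f f' : ℝ → ℝ}
    (hf : ∀ x ∈ D, HasDerivAt f (f' x) x) (hf'₀ : ∀ x ∈ interior D, 0 ≤ f' x) :
    MonotoneOn f D :=
  monotoneOn_of_hasDerivWithinAt_nonneg hD (fun x hx ↦ (hf x hx).continuousAt.continuousWithinAt)
    (fun x hx ↦ (hf x (interior_subset hx)).hasDerivWithinAt) hf'₀

lemma one_sub_rpow_le_taylor_two {ρ t : ℝ} (hρ : 2 ≤ ρ) (ht₀ : 0 ≤ t) (ht₁ : t ≤ 1) :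
    (1 - t) ^ ρ ≤ 1 - ρ * t + ρ * (ρ - 1) / 2 * t ^ 2 := by
  let g : ℝ → ℝ := fun s ↦ 1 - ρ * s + ρ * (ρ - 1) / 2 * s ^ 2 - (1 - s) ^ ρ
  have hg : ∀ s, HasDerivAt g (ρ * ((1 - s) ^ (ρ - 1) - (1 - (ρ - 1) * s))) s := fun s ↦
    ((((hasDerivAt_id s).const_mul ρ).const_sub 1).add
      ((hasDerivAt_pow 2 s).const_mul (ρ * (ρ - 1) / 2))).sub
      (((hasDerivAt_id s).const_sub 1).rpow_const (Or.inr (by linarith)))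
      |>.congr_deriv (by
        simp only [mul_one, Nat.cast_ofNat, Nat.add_one_sub_one, pow_one, neg_mul, one_mul, id_eq,
          sub_neg_eq_add]
        ring)
  have hmono : MonotoneOn g (Icc 0 1) := by
    refine monotoneOn_of_hasDerivAt_nonneg (convex_Icc 0 1) (fun s _ ↦ hg s) ?_
    rw [interior_Icc]
    rintro s ⟨-, hs₁⟩
    have bernoulli : 1 + (ρ - 1) * -s ≤ (1 + -s) ^ (ρ - 1) :=
      one_add_mul_self_le_rpow_one_add (by linarith) (by linarith)
    rw [← sub_eq_add_neg] at bernoulli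
    exact mul_nonneg (by linarith) (by linarith)
  simpa [g] using hmono ⟨le_rfl, zero_le_one⟩ ⟨ht₀, ht₁⟩ ht₀

lemma sub_rpow_le_taylor_two {ρ c u : ℝ} (hρ : 2 ≤ ρ) (hc : 0 ≤ c) (hu : 0 < u)
    (hcu : c ≤ u) :
    (u - c) ^ ρ ≤ u ^ ρ - ρ * c * u ^ (ρ - 1) + ρ * (ρ - 1) / 2 * c ^ 2 * u ^ (ρ - 2) := by
  have hscaled := mul_le_mul_of_nonneg_left
    (one_sub_rpow_le_taylor_two hρ (div_nonneg hc hu.le) ((div_le_one hu).2 hcu))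
    (rpow_nonneg hu.le ρ)
  have hbase : u ^ ρ * (1 - c / u) ^ ρ = (u - c) ^ ρ := by
    rw [← mul_rpow hu.le (by rw [sub_nonneg]; exact (div_le_one hu).2 hcu), mul_one_sub,
      mul_div_cancel₀ _ hu.ne']
  have h₁ : u ^ (ρ - 1) = u ^ ρ / u := by rw [rpow_sub hu, rpow_one]
  have h₂ : u ^ (ρ - 2) = u ^ ρ / u ^ 2 := by rw [rpow_sub hu, rpow_two]
  rw [hbase] at hscaled
  rw [h₁, h₂]
  exact hscaled.trans_eq (by ring)

noncomputable def parametricRemainder (ρ c u : ℝ) : ℝ :=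
  (u ^ (1 + ρ) - (u - c) ^ (1 + ρ)) / (c * (1 + ρ)) - u ^ ρ +
    ρ * c * u ^ (ρ - 1) / 2 - ρ * (ρ - 1) / (2 * (1 + ρ))

lemma hasDerivAt_parametricRemainder {ρ c u : ℝ} (hρ : 0 ≤ ρ) (hu : 0 < u) :
    HasDerivAt (parametricRemainder ρ c)
      ((u ^ ρ - (u - c) ^ ρ) / c - ρ * u ^ (ρ - 1) + ρ * (ρ - 1) * c * u ^ (ρ - 2) / 2)
      u := by
  have hρ₁ : 1 + ρ ≠ 0 := by positivity
  have hpow : ∀ p : ℝ, HasDerivAt (fun x : ℝ ↦ x ^ p) (p * u ^ (p - 1)) u := fun p ↦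
    hasDerivAt_rpow_const (Or.inl hu.ne')
  have hshift : HasDerivAt (fun x : ℝ ↦ (x - c) ^ (1 + ρ)) ((1 + ρ) * (u - c) ^ ρ) u := by
    simpa using ((hasDerivAt_id u).sub_const c).rpow_const (p := 1 + ρ) (Or.inr (by linarith))
  have := ((((hpow (1 + ρ)).sub hshift).div_const (c * (1 + ρ))).sub (hpow ρ)).add
    (((hpow (ρ - 1)).const_mul (ρ * c)).div_const 2)
    |>.sub_const (ρ * (ρ - 1) / (2 * (1 + ρ)))
  refine this.congr_deriv ?_
  simp only [add_sub_cancel_left, show ρ - 1 - 1 = ρ - 2 by ring]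
  field_simp

lemma parametricRemainder_self {ρ c : ℝ} (hρ : 0 ≤ ρ) (hc : 0 < c) :
    parametricRemainder ρ c c = ρ * (ρ - 1) * (c ^ ρ - 1) / (2 * (1 + ρ)) := by
  have hρ₁ : 1 + ρ ≠ 0 := by positivity
  rw [parametricRemainder, sub_self, zero_rpow hρ₁, rpow_add hc, rpow_sub hc, rpow_one]
  field_simp
  ring

lemma monotoneOn_parametricRemainder {ρ c : ℝ} (hρ : 2 ≤ ρ) (hc : 0 < c) :
    MonotoneOn (parametricRemainder ρ c) (Ici c) := by
  refine monotoneOn_of_hasDerivAt_nonneg (convex_Ici c)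
    (fun u hu ↦ hasDerivAt_parametricRemainder (by linarith) (hc.trans_le hu)) ?_
  rw [interior_Ici]
  intro u (hu : c < u)
  have htaylor := sub_rpow_le_taylor_two hρ hc.le (hc.trans hu) hu.le
  calc 0 ≤ (u ^ ρ - (u - c) ^ ρ -
          (ρ * c * u ^ (ρ - 1) - ρ * (ρ - 1) / 2 * c ^ 2 * u ^ (ρ - 2))) / c :=
        div_nonneg (by linarith) hc.le
    _ = _ := by field_simp; ring

/-- Nonnegativity of the parametric function for ρ ≥ 2 (Appendix G). -/
theorem parametric_nonneg_rho_ge_two (ρ c : ℝ) (hρ : 2 ≤ ρ) (hc : 1 < c) :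
    ∀ u : ℝ, c ≤ u →
      0 ≤ (u ^ (1 + ρ) - (u - c) ^ (1 + ρ)) / (c * (1 + ρ)) - u ^ ρ +
          ρ * c * u ^ (ρ - 1) / 2 - ρ * (ρ - 1) / (2 * (1 + ρ)) := by
  intro u hu
  have hρ₀ : 0 ≤ ρ := by linarith
  have hcρ : 1 ≤ c ^ ρ := one_le_rpow hc.le hρ₀
  calc 0 ≤ parametricRemainder ρ c c := by
        rw [parametricRemainder_self hρ₀ (by linarith)]
        exact div_nonneg (mul_nonneg (mul_nonneg hρ₀ (by linarith)) (by linarith)) (by linarith)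
    _ ≤ parametricRemainder ρ c u :=
        monotoneOn_parametricRemainder hρ (by linarith) self_mem_Ici hu hu
end

section
/- Let ρ > 0, M a positive integer, probabilities p_1,...,p_M summing to 1, and costs c_1,...,c_M with all c_i > 1 and cumulative sums S_i. Then ∑_{i=1}^M S_i^ρ p_i ≥ ∑_{i=1}^M ∑_{j=1}^{⌊c_i⌋} (p_i/⌊c_i⌋) · (∑_{k=1}^{i−1} ⌊c_k⌋ + j)^ρ. -/
/-- The ρ-th moment of guessing cost dominates the ρ-th moment of the guessing
number of the auxiliary split random variable Z (eqs. (16)–(19)). -/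
theorem guessing_cost_dominates_split_guesswork
    (M : ℕ) (hM : 0 < M) (ρ : ℝ) (hρ : 0 < ρ)
    (p c : ℕ → ℝ)
    (hp : ∀ k, 1 ≤ k → k ≤ M → 0 ≤ p k)
    (hpsum : ∑ k ∈ Finset.Icc 1 M, p k = 1)
    (hc : ∀ k, 1 ≤ k → k ≤ M → 1 < c k)
    (S : ℕ → ℝ) (hS : ∀ k, S k = ∑ l ∈ Finset.Icc 1 k, c l) :
    ∑ i ∈ Finset.Icc 1 M, ∑ j ∈ Finset.Icc 1 ⌊c i⌋₊,
        (p i / (⌊c i⌋₊ : ℝ)) *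
          ((∑ k ∈ Finset.Icc 1 (i - 1), (⌊c k⌋₊ : ℝ)) + (j : ℝ)) ^ ρ ≤
      ∑ i ∈ Finset.Icc 1 M, S i ^ ρ * p i := by
  apply Finset.sum_le_sum
  intro i hi
  rw [Finset.mem_Icc] at hi
  obtain ⟨hi1, hiM⟩ := hi
  have hci : 1 < c i := hc i hi1 hiM
  have hni : 1 ≤ ⌊c i⌋₊ := Nat.le_floor (by exact_mod_cast hci.le)
  have hpi : 0 ≤ p i := hp i hi1 hiM
  -- Each term's base is ≤ S i
  have hSi : S i = (∑ k ∈ Finset.Icc 1 (i - 1), c k) + c i := by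
    rw [hS]
    have : i = (i - 1) + 1 := (Nat.succ_pred_eq_of_pos hi1).symm
    rw [this, Finset.sum_Icc_succ_top (by omega)]; simp
  have hbound : ∀ j ∈ Finset.Icc 1 ⌊c i⌋₊,
      (p i / (⌊c i⌋₊ : ℝ)) *
        ((∑ k ∈ Finset.Icc 1 (i - 1), (⌊c k⌋₊ : ℝ)) + (j : ℝ)) ^ ρ ≤
      (p i / (⌊c i⌋₊ : ℝ)) * S i ^ ρ := by
    intro j hj
    rw [Finset.mem_Icc] at hj
    have hbase_nonneg : 0 ≤ (∑ k ∈ Finset.Icc 1 (i - 1), (⌊c k⌋₊ : ℝ)) + (j : ℝ) := by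
      have : (0:ℝ) ≤ ∑ k ∈ Finset.Icc 1 (i - 1), (⌊c k⌋₊ : ℝ) :=
        Finset.sum_nonneg fun k _ => by positivity
      positivity
    have hle : (∑ k ∈ Finset.Icc 1 (i - 1), (⌊c k⌋₊ : ℝ)) + (j : ℝ) ≤ S i := by
      rw [hSi]
      apply add_le_add
      · apply Finset.sum_le_sum
        intro k hk
        rw [Finset.mem_Icc] at hk
        exact Nat.floor_le ((hc k hk.1 (by omega)).le.trans' (by norm_num))
      · calc (j : ℝ) ≤ (⌊c i⌋₊ : ℝ) := by exact_mod_cast hj.2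
          _ ≤ c i := Nat.floor_le (by linarith)
    exact mul_le_mul_of_nonneg_left
      (Real.rpow_le_rpow hbase_nonneg hle hρ.le) (by positivity)
  calc ∑ j ∈ Finset.Icc 1 ⌊c i⌋₊,
        (p i / (⌊c i⌋₊ : ℝ)) *
          ((∑ k ∈ Finset.Icc 1 (i - 1), (⌊c k⌋₊ : ℝ)) + (j : ℝ)) ^ ρ
      ≤ ∑ j ∈ Finset.Icc 1 ⌊c i⌋₊, (p i / (⌊c i⌋₊ : ℝ)) * S i ^ ρ :=
        Finset.sum_le_sum hbound
    _ = S i ^ ρ * p i := by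
        rw [Finset.sum_const, Nat.card_Icc, Nat.add_sub_cancel]
        have hn : (0:ℝ) < (⌊c i⌋₊ : ℝ) := by exact_mod_cast hni
        field_simp
        rw [nsmul_eq_mul]
        field_simp
end
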